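/- arXiv:2105.14841 — 3 statements merged into one kernel-verified Lean document; each statement's English description precedes it below -/
import Mathlib

section
/- Let p be a prime and k a positive integer with p > k. For all integers r ≥ 0 and m ≥ 1 with r + ⌈m/p⌉ ≥ k + 1, the p-adic valuation of p^r · (m-1)! / (r! · (⌈m/p⌉-1)!) is at least k. -/
/-!
Write `q = ⌈m/p⌉`, so that `q - 1 = ⌊(m-1)/p⌋`. Since `v_p(n!) = v_p(⌊n/p⌋!) + ⌊n/p⌋`, we get
`v_p((m-1)!) = v_p((q-1)!) + (q-1)` exactly, so the valuation in question is
`r - v_p(r!) + (q - 1)`. Legendre's bound `(p-1) v_p(r!) < r` together with `k ≤ p - 1` shows that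
`p^r/r!` contributes at least `min k r`, which with `r + q ≥ k + 1` gives the bound `k`.
-/

open Nat

lemma Nat.ceilDiv_sub_one {p : ℕ} (hp : 0 < p) (m : ℕ) : m ⌈/⌉ p - 1 = (m - 1) / p := by
  rw [Nat.ceilDiv_eq_add_pred_div]
  cases m with
  | zero => simp [Nat.div_eq_of_lt (Nat.sub_lt hp one_pos)]
  | succ m => rw [show m + 1 + p - 1 = m + p by omega, Nat.add_div_right m hp]; simp

section Factorial

variable {p : ℕ} [Fact p.Prime]

lemma padicValNat_factorial_eq_div (n : ℕ) :
    padicValNat p n ! = padicValNat p (n / p)! + n / p := by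
  rw [← padicValNat_mul_div_factorial, padicValNat_factorial_mul]

lemma min_add_padicValNat_factorial_le {k : ℕ} (hkp : k < p) (r : ℕ) :
    min k r + padicValNat p r ! ≤ r := by
  rcases le_or_gt k r with hkr | hrk
  · rw [min_eq_left hkr]
    rcases Nat.eq_zero_or_pos r with rfl | hr
    · simp_all
    have hlt := sub_one_mul_padicValNat_factorial_lt_of_ne_zero p hr.ne'
    have hle := padicValNat_factorial_le p r
    have hk : k ≤ p - 1 := by omega
    nlinarith [Nat.mul_le_mul_right (padicValNat p r !) hk]
  · rw [min_eq_right hrk.le, padicValNat_factorial_eq_div r, Nat.div_eq_of_lt (by omega)]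
    simp

end Factorial

theorem stmt0_general (p k : ℕ) (hp : p.Prime) (hkp : k < p)
    (r m : ℕ) (h : k + 1 ≤ r + (m ⌈/⌉ p)) :
    (k : ℤ) ≤ padicValRat p
      ((p : ℚ) ^ r * (Nat.factorial (m - 1)) /
        (Nat.factorial r * Nat.factorial ((m ⌈/⌉ p) - 1))) := by
  have : Fact p.Prime := ⟨hp⟩
  have hvm : padicValNat p (m - 1)! = padicValNat p (m ⌈/⌉ p - 1)! + (m ⌈/⌉ p - 1) := by
    rw [Nat.ceilDiv_sub_one hp.pos, padicValNat_factorial_eq_div]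
  have hvr := min_add_padicValNat_factorial_le hkp r
  have hp0 : (p : ℚ) ≠ 0 := by exact_mod_cast hp.ne_zero
  have hfac (n : ℕ) : (n ! : ℚ) ≠ 0 := by exact_mod_cast n.factorial_ne_zero
  rw [padicValRat.div (mul_ne_zero (pow_ne_zero r hp0) (hfac _)) (mul_ne_zero (hfac _) (hfac _)),
    padicValRat.mul (pow_ne_zero r hp0) (hfac _), padicValRat.mul (hfac _) (hfac _),
    padicValRat.pow (p : ℚ), padicValRat.self hp.one_lt]
  simp only [padicValRat.of_nat]
  omega

/-- For a prime `p` and `0 < k < p`, whenever `r + ⌈m/p⌉ ≥ k + 1` (with `m ≥ 1`),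
the `p`-adic valuation of `p^r * (m-1)! / (r! * (⌈m/p⌉ - 1)!)` is at least `k`. -/
theorem stmt0 (p k : ℕ) (hp : p.Prime) (hk : 0 < k) (hkp : k < p)
    (r m : ℕ) (hm : 1 ≤ m) (h : k + 1 ≤ r + (m ⌈/⌉ p)) :
    (k : ℤ) ≤ padicValRat p
      ((p : ℚ) ^ r * (Nat.factorial (m - 1)) /
        (Nat.factorial r * Nat.factorial ((m ⌈/⌉ p) - 1))) :=
  stmt0_general p k hp hkp r m h
end

section
/- Let R be a commutative ring and P(z) = ∑_{m≥1} r_m z^m/m! a formal power series with r_m ∈ R for all m ≥ 1 and r_1 = 1 (viewed as a power series over a ℚ-algebra containing R, or with divided-power coefficients). Then the compositional inverse of P has the form Q(z) = ∑_{m≥1} s_m z^m/m! with s_m ∈ R for all m ≥ 1. -/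
/-!
Call `F` a Hurwitz series over `R` when all its divided-power coefficients `n! · coeff n F` lie
in `R`. Since `(n+1)! · coeff (n+1) F = n! · coeff n F'`, this means: `F(0) ∈ R` and `F'` is
again Hurwitz. By the Leibniz rule and induction on `n`, Hurwitz series form a subring, and
`(P^(m+1)/(m+1)!)' = (P^m/m!) · P'` shows that the divided powers `P^m/m!` of a Hurwitz series
with `P(0) = 0` are Hurwitz. Reading off the `n`-th coefficient of `Q(P(z)) = z`, where
`coeff n (P^n) = 1`, gives `n! s_n = n! [n = 1] - ∑_{m<n} s_m · n! coeff n (P^m/m!)`, and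
induction on `n` concludes.
-/

open PowerSeries

/-- Formal composition `f(a)` of power series, well-behaved when `a` has zero constant term:
the `n`-th coefficient is `∑_{m ≤ n} (coeff m f) * coeff n (a^m)`. -/
noncomputable def psComp {A : Type*} [CommRing A] (f a : PowerSeries A) : PowerSeries A :=
  PowerSeries.mk fun n => ∑ m ∈ Finset.range (n + 1), (coeff m f) * coeff n (a ^ m)

open Nat Finset

namespace PowerSeries

variable {A : Type*} [CommRing A]

lemma factorial_succ_mul_coeff_succ (F : A⟦X⟧) (n : ℕ) :
    ((n + 1)! : A) * coeff (n + 1) F = n ! * coeff n (d⁄dX A F) := by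
  rw [coeff_derivative, factorial_succ]
  push_cast
  ring

variable (R : Subring A)

def hurwitz : Subring A⟦X⟧ where
  carrier := {F | ∀ n, (n ! : A) * coeff n F ∈ R}
  mul_mem' {F G} hF hG n := by
    have hD {H : A⟦X⟧} (hH : ∀ k, (k ! : A) * coeff k H ∈ R) (k : ℕ) :
        (k ! : A) * coeff k (d⁄dX A H) ∈ R :=
      factorial_succ_mul_coeff_succ H k ▸ hH (k + 1)
    induction n generalizing F G with
    | zero => simpa using R.mul_mem (by simpa using hF 0) (by simpa using hG 0)
    | succ n ih =>
      rw [factorial_succ_mul_coeff_succ, Derivation.leibniz, smul_eq_mul, smul_eq_mul, map_add,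
        mul_add]
      exact R.add_mem (ih hF (hD hG)) (ih hG (hD hF))
  one_mem' n := by
    rcases n with _ | n <;> simp [coeff_one]
  add_mem' hF hG n := by
    simpa only [map_add, mul_add] using R.add_mem (hF n) (hG n)
  zero_mem' n := by simp
  neg_mem' hF n := by simpa only [map_neg, mul_neg] using R.neg_mem (hF n)

variable {R}

lemma mem_hurwitz {F : A⟦X⟧} : F ∈ hurwitz R ↔ ∀ n, (n ! : A) * coeff n F ∈ R := Iff.rfl

lemma mem_hurwitz_iff_derivative {F : A⟦X⟧} :
    F ∈ hurwitz R ↔ constantCoeff F ∈ R ∧ d⁄dX A F ∈ hurwitz R := by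
  simp only [mem_hurwitz, ← factorial_succ_mul_coeff_succ]
  constructor
  · exact fun hF => ⟨by simpa using hF 0, fun n => hF (n + 1)⟩
  · rintro ⟨h0, hD⟩ (_ | n)
    · simpa using h0
    · exact hD n

lemma X_mem_hurwitz : (X : A⟦X⟧) ∈ hurwitz R :=
  mem_hurwitz_iff_derivative.2 ⟨by simp, by simp⟩

lemma coeff_pow_self {P : A⟦X⟧} (hP0 : constantCoeff P = 0) (n : ℕ) :
    coeff n (P ^ n) = coeff 1 P ^ n := by
  obtain ⟨P, rfl⟩ := X_dvd_iff.2 hP0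
  rw [mul_pow, coeff_X_pow_mul', if_pos le_rfl, Nat.sub_self, coeff_zero_eq_constantCoeff,
    map_pow, coeff_succ_X_mul, coeff_zero_eq_constantCoeff]

variable [Algebra ℚ A]

lemma factorial_mul_coeff_inv_factorial_smul (F : A⟦X⟧) (m n : ℕ) :
    (m ! : A) * coeff n ((m ! : ℚ)⁻¹ • F) = coeff n F := by
  rw [coeff_smul, mul_smul_comm, ← nsmul_eq_mul, ← Nat.cast_smul_eq_nsmul ℚ, smul_smul,
    inv_mul_cancel₀ (by positivity), one_smul]

lemma derivative_inv_factorial_smul_pow (P : A⟦X⟧) (m : ℕ) :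
    d⁄dX A (((m + 1)! : ℚ)⁻¹ • P ^ (m + 1)) = ((m ! : ℚ)⁻¹ • P ^ m) * d⁄dX A P := by
  rw [Derivation.map_smul_of_tower, derivative_pow, Nat.add_sub_cancel, mul_assoc,
    ← nsmul_eq_mul, ← Nat.cast_smul_eq_nsmul ℚ, smul_smul, smul_mul_assoc]
  congr 1
  rw [factorial_succ]
  push_cast
  field_simp

lemma inv_factorial_smul_pow_mem_hurwitz {P : A⟦X⟧} (hP0 : constantCoeff P = 0)
    (hP : P ∈ hurwitz R) (m : ℕ) : (m ! : ℚ)⁻¹ • P ^ m ∈ hurwitz R := by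
  induction m with
  | zero => simp
  | succ m ih =>
    refine mem_hurwitz_iff_derivative.2 ⟨?_, ?_⟩
    · simp [hP0]
    · rw [derivative_inv_factorial_smul_pow]
      exact mul_mem ih (mem_hurwitz_iff_derivative.1 hP).2

lemma factorial_mul_coeff_of_psComp_eq_X {P Q : A⟦X⟧} (hP0 : constantCoeff P = 0)
    (hP1 : coeff 1 P = 1) (hinv : psComp Q P = X) (n : ℕ) :
    (n ! : A) * coeff n Q = n ! * coeff n X -
      ∑ m ∈ range n, (m ! * coeff m Q) * (n ! * coeff n ((m ! : ℚ)⁻¹ • P ^ m)) := by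
  have h := congrArg (coeff n) hinv
  rw [psComp, coeff_mk, sum_range_succ, coeff_pow_self hP0, hP1, one_pow, mul_one] at h
  have hterm (m : ℕ) : (m ! * coeff m Q) * (n ! * coeff n ((m ! : ℚ)⁻¹ • P ^ m)) =
      n ! * (coeff m Q * coeff n (P ^ m)) := by
    rw [← factorial_mul_coeff_inv_factorial_smul (P ^ m) m n]
    ring
  simp_rw [hterm, ← mul_sum, ← h]
  ring

end PowerSeries

theorem stmt1_general (A : Type*) [CommRing A] [Algebra ℚ A] (R : Subring A)
    (P Q : PowerSeries A)
    (hP0 : constantCoeff P = 0)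
    (hr : ∀ m : ℕ, 1 ≤ m → (Nat.factorial m : A) * coeff m P ∈ R)
    (hr1 : coeff 1 P = 1)
    (hinv : psComp Q P = (PowerSeries.X : PowerSeries A)) :
    ∀ m : ℕ, 1 ≤ m → (Nat.factorial m : A) * coeff m Q ∈ R := by
  have hP : P ∈ hurwitz R := by
    rintro (_ | m)
    · simp [hP0]
    · exact hr (m + 1) m.succ_pos
  suffices hQ : Q ∈ hurwitz R from fun m _ => hQ m
  intro n
  induction n using Nat.strong_induction_on with
  | _ n ih =>
    rw [factorial_mul_coeff_of_psComp_eq_X hP0 hr1 hinv]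
    exact R.sub_mem (X_mem_hurwitz n) <| R.sum_mem fun m hm =>
      R.mul_mem (ih m (mem_range.1 hm)) (inv_factorial_smul_pow_mem_hurwitz hP0 hP m n)

/-- Let `R` be a subring of a `ℚ`-algebra `A` and `P(z) = ∑_{m≥1} r_m z^m/m!` a power series
with zero constant term, `r_m = m! · (coeff m P) ∈ R` for all `m ≥ 1` and `r_1 = 1`.
If `Q` is the compositional inverse of `P` (zero constant term, `Q(P(z)) = z`), then the
divided-power coefficients `s_m = m! · (coeff m Q)` also lie in `R` for all `m ≥ 1`. -/
theorem stmt1 (A : Type*) [CommRing A] [Algebra ℚ A] (R : Subring A)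
    (P Q : PowerSeries A)
    (hP0 : constantCoeff P = 0) (hQ0 : constantCoeff Q = 0)
    (hr : ∀ m : ℕ, 1 ≤ m → (Nat.factorial m : A) * coeff m P ∈ R)
    (hr1 : coeff 1 P = 1)
    (hinv : psComp Q P = (PowerSeries.X : PowerSeries A)) :
    ∀ m : ℕ, 1 ≤ m → (Nat.factorial m : A) * coeff m Q ∈ R :=
  stmt1_general A R P Q hP0 hr hr1 hinv
end

section
/- Write the product representation exp(g(t)) = ∏_{k≥1} (1 + a_k t^k) for a power series g ∈ t·ℚ_p⟦t⟧, with a_k ∈ ℚ_p. Then exp(g(t)) ∈ ℤ_p⟦t⟧ if and only if a_k ∈ ℤ_p for all k ≥ 1. -/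
/-!
Integrality of `a_k` is read off coefficient by coefficient: the coefficient of `t^n` in
`∏_{k ≤ n} (1 + a_k t^k)` is `a_n` plus the coefficient of `t^n` in `∏_{k < n} (1 + a_k t^k)`,
and the latter is a polynomial with integer coefficients in `a_1, …, a_{n-1}`. So by induction
on `n`, the first `n` coefficients of the product are `p`-adic integers exactly when
`a_1, …, a_n` are.
-/

open PowerSeries

namespace PowerSeries

variable {A : Type*} [CommRing A]

lemma mem_range_map_subtype_iff {S : Subring A} {f : A⟦X⟧} :
    f ∈ (map S.subtype).range ↔ ∀ n, coeff n f ∈ S := by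
  refine ⟨?_, fun h => ⟨mk fun n => ⟨coeff n f, h n⟩, by ext n; simp⟩⟩
  rintro ⟨f, rfl⟩ n
  simp

noncomputable def partialProdOnePlus (a : ℕ → A) (n : ℕ) : A⟦X⟧ :=
  ∏ k ∈ Finset.Icc 1 n, (1 + C (a k) * X ^ k)

lemma constantCoeff_partialProdOnePlus (a : ℕ → A) (n : ℕ) :
    constantCoeff (partialProdOnePlus a n) = 1 := by
  refine (map_prod _ _ _).trans (Finset.prod_eq_one fun k hk => ?_)
  have hk : k ≠ 0 := Nat.one_le_iff_ne_zero.mp (Finset.mem_Icc.mp hk).1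
  simp [zero_pow hk]

lemma partialProdOnePlus_succ (a : ℕ → A) (n : ℕ) :
    partialProdOnePlus a (n + 1) = (1 + C (a (n + 1)) * X ^ (n + 1)) * partialProdOnePlus a n := by
  rw [partialProdOnePlus, ← Finset.insert_Icc_right_eq_Icc_add_one (Nat.le_add_left 1 n),
    Finset.prod_insert (by simp), partialProdOnePlus]

lemma coeff_partialProdOnePlus_succ_self (a : ℕ → A) (n : ℕ) :
    coeff (n + 1) (partialProdOnePlus a (n + 1)) =
      coeff (n + 1) (partialProdOnePlus a n) + a (n + 1) := by
  have hX := coeff_X_pow_mul (partialProdOnePlus a n) (n + 1) 0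
  rw [zero_add] at hX
  rw [partialProdOnePlus_succ, add_mul, one_mul, map_add, mul_assoc, coeff_C_mul, hX,
    coeff_zero_eq_constantCoeff, constantCoeff_partialProdOnePlus, mul_one]

lemma partialProdOnePlus_mem_range_map_subtype {S : Subring A} {a : ℕ → A} {n : ℕ}
    (ha : ∀ k ∈ Finset.Icc 1 n, a k ∈ S) :
    partialProdOnePlus a n ∈ (map S.subtype).range := by
  refine Subring.prod_mem _ fun k hk => add_mem (one_mem _) (mul_mem ?_ (pow_mem ?_ k))
  · exact ⟨C ⟨a k, ha k hk⟩, map_C _ _⟩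
  · exact ⟨X, map_X _⟩

theorem forall_coeff_partialProdOnePlus_mem_iff (S : Subring A) (a : ℕ → A) :
    (∀ n, coeff n (partialProdOnePlus a n) ∈ S) ↔ ∀ k, 1 ≤ k → a k ∈ S := by
  constructor
  · intro hcoeff
    suffices h : ∀ n, ∀ k ∈ Finset.Icc 1 n, a k ∈ S from fun k hk => h k k (by simp [hk])
    intro n
    induction n with
    | zero => simp
    | succ n ih =>
      intro k hk
      rw [← Finset.insert_Icc_right_eq_Icc_add_one (Nat.le_add_left 1 n),
        Finset.mem_insert] at hk
      rcases hk with rfl | hk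
      · have hprev := mem_range_map_subtype_iff.mp
          (partialProdOnePlus_mem_range_map_subtype ih) (n + 1)
        have hnext := hcoeff (n + 1)
        rw [coeff_partialProdOnePlus_succ_self] at hnext
        simpa using sub_mem hnext hprev
      · exact ih k hk
  · intro ha n
    exact mem_range_map_subtype_iff.mp (partialProdOnePlus_mem_range_map_subtype
      fun k hk => ha k (Finset.mem_Icc.mp hk).1) n

end PowerSeries

theorem stmt3_general (p : ℕ) [hp : Fact p.Prime]
    (g : PowerSeries ℚ_[p])
    (a : ℕ → ℚ_[p])
    (hprod : ∀ n : ℕ, coeff n (psComp (PowerSeries.exp ℚ_[p]) g) =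
      coeff n (∏ k ∈ Finset.Icc 1 n, (1 + PowerSeries.C (a k) *
        PowerSeries.X ^ k))) :
    (∀ n, ‖coeff n (psComp (PowerSeries.exp ℚ_[p]) g)‖ ≤ 1) ↔
    (∀ k, 1 ≤ k → ‖a k‖ ≤ 1) := by
  simp only [hprod, ← PadicInt.mem_subring_iff]
  exact forall_coeff_partialProdOnePlus_mem_iff (PadicInt.subring p) a

/-- Write `exp(g(t)) = ∏_{k≥1} (1 + a_k t^k)` (a `t`-adically convergent product) for
`g ∈ t·ℚ_p⟦t⟧`.  Then `exp(g(t)) ∈ ℤ_p⟦t⟧` iff `a_k ∈ ℤ_p` for all `k ≥ 1`. -/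
theorem stmt3 (p : ℕ) [hp : Fact p.Prime]
    (g : PowerSeries ℚ_[p]) (hg0 : constantCoeff g = 0)
    (a : ℕ → ℚ_[p])
    (hprod : ∀ n : ℕ, coeff n (psComp (PowerSeries.exp ℚ_[p]) g) =
      coeff n (∏ k ∈ Finset.Icc 1 n, (1 + PowerSeries.C (a k) *
        PowerSeries.X ^ k))) :
    (∀ n, ‖coeff n (psComp (PowerSeries.exp ℚ_[p]) g)‖ ≤ 1) ↔
    (∀ k, 1 ≤ k → ‖a k‖ ≤ 1) :=
  stmt3_general p (hp := hp) g a hprod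
end
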